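/- There is a well-defined K-linear map τ: KG ⊗_{G_par} M → M with τ(g ⊗_{G_par} m) = [g]·m for every left K_par G-module M, and τ ∘ ι = id_M where ι(m) = 1 ⊗_{G_par} m. -/

import Mathlib

/-- The defining relations of Exel's semigroup `S(G)` of a group `G`:
`[1] = 1`, `[s⁻¹][s][t] = [s⁻¹][st]`, `[s][t][t⁻¹] = [st][t⁻¹]`. -/
inductive ExelRel (G : Type*) [Group G] : FreeMonoid G → FreeMonoid G → Prop
  | one : ExelRel G (FreeMonoid.of 1) 1
  | left (s t : G) : ExelRel G
      (FreeMonoid.of s⁻¹ * FreeMonoid.of s * FreeMonoid.of t)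
      (FreeMonoid.of s⁻¹ * FreeMonoid.of (s * t))
  | right (s t : G) : ExelRel G
      (FreeMonoid.of s * FreeMonoid.of t * FreeMonoid.of t⁻¹)
      (FreeMonoid.of (s * t) * FreeMonoid.of t⁻¹)

/-- The congruence on the free monoid on `G` generated by the Exel relations. -/
def ExelCon (G : Type*) [Group G] : Con (FreeMonoid G) := conGen (ExelRel G)

/-- Exel's semigroup (an inverse monoid) `S(G)` of the group `G`. -/
abbrev ExelMonoid (G : Type*) [Group G] := (ExelCon G).Quotient

/-- The canonical generator `[g]` of `S(G)`. -/
def ExelMonoid.of {G : Type*} [Group G] (g : G) : ExelMonoid G :=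
  (ExelCon G).mk' (FreeMonoid.of g)

/-- The idempotent `e_g := [g][g⁻¹]` in `S(G)`. -/
def ExelMonoid.e {G : Type*} [Group G] (g : G) : ExelMonoid G :=
  ExelMonoid.of g * ExelMonoid.of g⁻¹

/-- The partial group algebra `K_par G`: the semigroup `K`-algebra of Exel's semigroup. -/
abbrev KparG (K G : Type*) [CommRing K] [Group G] := MonoidAlgebra K (ExelMonoid G)

/-- The canonical generator `[g]` of `K_par G`. -/
noncomputable def pr (K : Type*) {G : Type*} [CommRing K] [Group G] (g : G) : KparG K G :=
  MonoidAlgebra.of K (ExelMonoid G) (ExelMonoid.of g)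

/-- The idempotent `e_g := [g][g⁻¹]` in `K_par G`. -/
noncomputable def eK (K : Type*) {G : Type*} [CommRing K] [Group G] (g : G) : KparG K G :=
  pr K g * pr K g⁻¹

open TensorProduct

/-- The group algebra `KG`. -/
abbrev KG (K G : Type*) [CommRing K] [Group G] := MonoidAlgebra K G

/-- The relation `KG`-submodule of `KG ⊗[K] M` defining `KG ⊗_{G_par} M` for a left
`K_par G`-module `M` with its induced partial action:
generated by the elements `g ⊗ [h]·m − gh ⊗ e_{h⁻¹}·m`. -/
noncomputable def glueRel (K G M : Type*) [CommRing K] [Group G]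
    [AddCommGroup M] [Module K M] [Module (KparG K G) M] [IsScalarTower K (KparG K G) M] :
    Submodule (KG K G) (KG K G ⊗[K] M) :=
  Submodule.span (KG K G) {w : KG K G ⊗[K] M | ∃ (g h : G) (m : M),
    w = MonoidAlgebra.of K G g ⊗ₜ[K] (pr K h • m) -
      MonoidAlgebra.of K G (g * h) ⊗ₜ[K] (eK K h⁻¹ • m)}

/-- The universal globalization `Λ(M) = KG ⊗_{G_par} M` of a left `K_par G`-module `M`. -/
noncomputable abbrev Glob (K G M : Type*) [CommRing K] [Group G]
    [AddCommGroup M] [Module K M] [Module (KparG K G) M] [IsScalarTower K (KparG K G) M] :=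
  KG K G ⊗[K] M ⧸ glueRel K G M

/-!
The map `KG ⊗[K] M → M`, `g ⊗ m ↦ [g]·m`, kills the relations because `[g][h] = [gh] e_{h⁻¹}`
holds in `S(G)`. Since `KG` is spanned over `K` by the group elements, the `KG`-submodule
generated by the relations is the `K`-span of their left translates by elements `g'` of `G`;
translating only replaces `g` by `g'g`, so the map kills these as well and descends to
`KG ⊗_{G_par} M`.
-/

namespace ExelMonoid

variable {G : Type*} [Group G]

theorem mk'_eq_of_rel {x y : FreeMonoid G} (h : ExelRel G x y) :
    (ExelCon G).mk' x = (ExelCon G).mk' y :=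
  (Con.eq _).mpr (ConGen.Rel.of _ _ h)

theorem of_one : of (1 : G) = 1 :=
  mk'_eq_of_rel ExelRel.one

theorem of_inv_mul_of_mul_of (s t : G) : of s⁻¹ * of s * of t = of s⁻¹ * of (s * t) := by
  simpa only [of, map_mul] using mk'_eq_of_rel (ExelRel.left s t)

theorem of_mul_of_mul_of_inv (s t : G) : of s * of t * of t⁻¹ = of (s * t) * of t⁻¹ := by
  simpa only [of, map_mul] using mk'_eq_of_rel (ExelRel.right s t)

theorem of_mul_of_inv_mul_of (g : G) : of g * of g⁻¹ * of g = of g := by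
  simpa only [inv_inv, inv_mul_cancel, of_one, mul_one] using of_inv_mul_of_mul_of g⁻¹ g

theorem of_mul_of (g h : G) : of g * of h = of (g * h) * e h⁻¹ := by
  calc of g * of h = of g * (of h * of h⁻¹ * of h) := by rw [of_mul_of_inv_mul_of]
    _ = of g * of h * of h⁻¹ * of h := by simp only [mul_assoc]
    _ = of (g * h) * e h⁻¹ := by
        rw [of_mul_of_mul_of_inv, e, inv_inv, mul_assoc]

end ExelMonoid

section PartialGroupAlgebra

variable (K : Type*) {G : Type*} [CommRing K] [Group G]

theorem pr_one : pr K (1 : G) = 1 := by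
  rw [pr, ExelMonoid.of_one, map_one]

theorem pr_mul_pr (g h : G) : pr K g * pr K h = pr K (g * h) * eK K h⁻¹ := by
  simp only [pr, eK, inv_inv, ← map_mul]
  rw [ExelMonoid.of_mul_of, ExelMonoid.e, inv_inv]

theorem span_range_of_eq_top : Submodule.span K (Set.range (MonoidAlgebra.of K G)) = ⊤ := by
  convert (MonoidAlgebra.basis G K).span_eq using 3
  ext g
  rw [MonoidAlgebra.basis_apply, MonoidAlgebra.of_apply]

end PartialGroupAlgebra

section Globalization

variable (K G M : Type*) [CommRing K] [Group G]
    [AddCommGroup M] [Module K M] [Module (KparG K G) M] [IsScalarTower K (KparG K G) M]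

noncomputable def tensorAct : KG K G ⊗[K] M →ₗ[K] M :=
  TensorProduct.lift <|
    (MonoidAlgebra.basis G K).constr K fun g => DistribSMul.toLinearMap K M (pr K g)

variable {K G M}

theorem tensorAct_of_tmul (g : G) (m : M) :
    tensorAct K G M (MonoidAlgebra.of K G g ⊗ₜ m) = pr K g • m := by
  rw [tensorAct, TensorProduct.lift.tmul, MonoidAlgebra.of_apply, ← MonoidAlgebra.basis_apply,
    Module.Basis.constr_basis, DistribSMul.toLinearMap_apply]

theorem tensorAct_of_smul_glue (g' g h : G) (m : M) :
    tensorAct K G M (MonoidAlgebra.of K G g' •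
      (MonoidAlgebra.of K G g ⊗ₜ[K] (pr K h • m) -
        MonoidAlgebra.of K G (g * h) ⊗ₜ[K] (eK K h⁻¹ • m))) = 0 := by
  rw [smul_sub, smul_tmul', smul_tmul', smul_eq_mul, smul_eq_mul, ← map_mul, ← map_mul,
    map_sub, tensorAct_of_tmul, tensorAct_of_tmul, smul_smul, smul_smul, pr_mul_pr, mul_assoc,
    sub_self]

theorem glueRel_le_ker_tensorAct :
    (glueRel K G M).restrictScalars K ≤ LinearMap.ker (tensorAct K G M) := by
  rw [glueRel, ← Submodule.span_smul_of_span_eq_top (span_range_of_eq_top K),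
    Submodule.span_le]
  rintro _ ⟨_, ⟨g', rfl⟩, _, ⟨g, h, m, rfl⟩, rfl⟩
  exact tensorAct_of_smul_glue g' g h m

variable (K G M)

noncomputable def globTau : Glob K G M →ₗ[K] M :=
  ((glueRel K G M).restrictScalars K).liftQ (tensorAct K G M) glueRel_le_ker_tensorAct ∘ₗ
    (Submodule.Quotient.restrictScalarsEquiv K (glueRel K G M)).symm.toLinearMap

variable {K G M}

theorem globTau_mk (x : KG K G ⊗[K] M) :
    globTau K G M (Submodule.Quotient.mk x) = tensorAct K G M x := rfl

end Globalization

/-- There is a well-defined `K`-linear map `τ : KG ⊗_{G_par} M → M` with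
`τ(g ⊗ m) = [g]·m` for every left `K_par G`-module `M`, and `τ ∘ ι = id_M` where
`ι(m) = 1 ⊗ m`. -/
theorem glob_tau_exists (K G M : Type*) [CommRing K] [Group G]
    [AddCommGroup M] [Module K M] [Module (KparG K G) M] [IsScalarTower K (KparG K G) M] :
    ∃ τ : Glob K G M →ₗ[K] M,
      (∀ (g : G) (m : M),
        τ (Submodule.Quotient.mk (MonoidAlgebra.of K G g ⊗ₜ[K] m)) = pr K g • m) ∧
      ∀ m : M, τ (Submodule.Quotient.mk ((1 : KG K G) ⊗ₜ[K] m)) = m := by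
  refine ⟨globTau K G M, fun g m => by rw [globTau_mk, tensorAct_of_tmul], fun m => ?_⟩
  rw [← map_one (MonoidAlgebra.of K G), globTau_mk, tensorAct_of_tmul, pr_one, one_smul]
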